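/- Let B := A^{coH} ⊆ A be a quantum principal bundle. The set Gau(B,A) of gauge transformations is a group under the convolution product (f∗g)(h) := f(h₁)g(h₂), with unit η_A∘ε_H: h ↦ ε(h)1_A and inverse given by the convolution inverse; in particular, the convolution product of two gauge transformations is again unital, convolution invertible, and right H-colinear with respect to the adjoint coaction Ad. -/

import Mathlib

open TensorProduct

noncomputable section

namespace QPBPaper

variable (k : Type) [Field k]

/-! ### Convolution algebra -/

/-- Convolution product of linear maps from a coalgebra to an algebra. -/
def conv {C A : Type} [AddCommGroup C] [Module k C] [Coalgebra k C]
    [Ring A] [Algebra k A] (f g : C →ₗ[k] A) : C →ₗ[k] A :=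
  LinearMap.mul' k A ∘ₗ TensorProduct.map f g ∘ₗ Coalgebra.comul

/-- Convolution unit `η ∘ ε`. -/
def convUnit {C A : Type} [AddCommGroup C] [Module k C] [Coalgebra k C]
    [Ring A] [Algebra k A] : C →ₗ[k] A :=
  Algebra.linearMap k A ∘ₗ Coalgebra.counit

def IsConvInvertible {C A : Type} [AddCommGroup C] [Module k C] [Coalgebra k C]
    [Ring A] [Algebra k A] (f : C →ₗ[k] A) : Prop :=
  ∃ g : C →ₗ[k] A, conv k f g = convUnit k ∧ conv k g f = convUnit k

/-! ### Balanced tensor products over (co)invariants -/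

section BalQ
variable {Ω : Type} [Ring Ω] [Algebra k Ω]

/-- The `S`-balancing relations inside `Ω ⊗ Ω`. -/
def balQ (S : Set Ω) : Submodule k (Ω ⊗[k] Ω) :=
  Submodule.span k
    {x | ∃ ω η β : Ω, β ∈ S ∧ x = (ω * β) ⊗ₜ[k] η - ω ⊗ₜ[k] (β * η)}

variable (S : Set Ω)

/-- The balanced tensor product `Ω ⊗_S Ω`. -/
abbrev BQuot := (Ω ⊗[k] Ω) ⧸ balQ k S

/-- Projection to the balanced tensor product. -/
def mkBQ : Ω ⊗[k] Ω →ₗ[k] BQuot k S := Submodule.mkQ (balQ k S)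

/-- Left multiplication on the first factor of `Ω ⊗_S Ω`. -/
def lBQ (x : Ω) : BQuot k S →ₗ[k] BQuot k S :=
  Submodule.mapQ _ _ (LinearMap.rTensor Ω (LinearMap.mulLeft k x)) (by
    rw [balQ, Submodule.span_le]
    rintro z ⟨ω, η, β, hβ, rfl⟩
    simp only [SetLike.mem_coe, Submodule.mem_comap, map_sub, LinearMap.rTensor_tmul,
      LinearMap.mulLeft_apply]
    apply Submodule.subset_span
    exact ⟨x * ω, η, β, hβ, by rw [mul_assoc]⟩)

/-- Right multiplication on the second factor of `Ω ⊗_S Ω`. -/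
def rBQ (x : Ω) : BQuot k S →ₗ[k] BQuot k S :=
  Submodule.mapQ _ _ (LinearMap.lTensor Ω (LinearMap.mulRight k x)) (by
    rw [balQ, Submodule.span_le]
    rintro z ⟨ω, η, β, hβ, rfl⟩
    simp only [SetLike.mem_coe, Submodule.mem_comap, map_sub, LinearMap.lTensor_tmul,
      LinearMap.mulRight_apply]
    apply Submodule.subset_span
    exact ⟨ω, η * x, β, hβ, by rw [mul_assoc]⟩)

/-- The multiplication `Ω ⊗_S Ω → Ω`. -/
def mBQ : BQuot k S →ₗ[k] Ω :=
  Submodule.liftQ _ (LinearMap.mul' k Ω) (by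
    rw [balQ, Submodule.span_le]
    rintro z ⟨ω, η, β, hβ, rfl⟩
    simp only [SetLike.mem_coe, LinearMap.mem_ker, map_sub, LinearMap.mul'_apply]
    rw [mul_assoc, sub_self])

/-- The balancing relations in positions `(1,2)` and `(2,3)` of `Ω ⊗ Ω ⊗ Ω`. -/
def bal3 : Submodule k (Ω ⊗[k] (Ω ⊗[k] Ω)) :=
  Submodule.span k
    ({x | ∃ ω η ζ β : Ω, β ∈ S ∧
        x = (ω * β) ⊗ₜ[k] (η ⊗ₜ[k] ζ) - ω ⊗ₜ[k] ((β * η) ⊗ₜ[k] ζ)} ∪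
     {x | ∃ ω η ζ β : Ω, β ∈ S ∧
        x = ω ⊗ₜ[k] ((η * β) ⊗ₜ[k] ζ) - ω ⊗ₜ[k] (η ⊗ₜ[k] (β * ζ))})

/-- The triple balanced tensor product `Ω ⊗_S Ω ⊗_S Ω`. -/
abbrev TQuot := (Ω ⊗[k] (Ω ⊗[k] Ω)) ⧸ bal3 k S

/-- Projection to the triple balanced tensor product. -/
def mkTQ : Ω ⊗[k] (Ω ⊗[k] Ω) →ₗ[k] TQuot k S := Submodule.mkQ (bal3 k S)

/-- Tensoring on the right by `z`: `Ω ⊗_S Ω → Ω ⊗_S Ω ⊗_S Ω`. -/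
def g12 (z : Ω) : BQuot k S →ₗ[k] TQuot k S :=
  Submodule.mapQ _ _ (LinearMap.lTensor Ω ((TensorProduct.mk k Ω Ω).flip z)) (by
    rw [balQ, Submodule.span_le]
    rintro w ⟨ω, η, β, hβ, rfl⟩
    simp only [SetLike.mem_coe, Submodule.mem_comap, map_sub, LinearMap.lTensor_tmul,
      TensorProduct.mk_apply, LinearMap.flip_apply]
    apply Submodule.subset_span
    exact Or.inl ⟨ω, η, z, β, hβ, rfl⟩)

/-- Tensoring on the left by `x`: `Ω ⊗_S Ω → Ω ⊗_S Ω ⊗_S Ω`. -/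
def g23 (x : Ω) : BQuot k S →ₗ[k] TQuot k S :=
  Submodule.mapQ _ _ (TensorProduct.mk k Ω (Ω ⊗[k] Ω) x) (by
    rw [balQ, Submodule.span_le]
    rintro w ⟨ω, η, β, hβ, rfl⟩
    simp only [SetLike.mem_coe, Submodule.mem_comap, map_sub, TensorProduct.mk_apply,
      TensorProduct.tmul_sub]
    apply Submodule.subset_span
    exact Or.inr ⟨x, ω, η, β, hβ, rfl⟩)

/-- Multiplication of the first two factors `Ω ⊗_S Ω ⊗_S Ω → Ω ⊗_S Ω`. -/
def m12 : TQuot k S →ₗ[k] BQuot k S :=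
  Submodule.liftQ _ (mkBQ k S ∘ₗ LinearMap.rTensor Ω (LinearMap.mul' k Ω) ∘ₗ
      (TensorProduct.assoc k Ω Ω Ω).symm.toLinearMap) (by
    rw [bal3, Submodule.span_le]
    rintro w (⟨ω, η, ζ, β, hβ, rfl⟩ | ⟨ω, η, ζ, β, hβ, rfl⟩) <;>
      simp only [SetLike.mem_coe, LinearMap.mem_ker, map_sub, LinearMap.comp_apply,
        LinearEquiv.coe_coe, TensorProduct.assoc_symm_tmul, LinearMap.rTensor_tmul,
        LinearMap.mul'_apply, TensorProduct.tmul_sub, map_sub]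
    · rw [mul_assoc, sub_self]
    · rw [mkBQ, Submodule.mkQ_apply, Submodule.mkQ_apply, ← Submodule.Quotient.mk_sub,
        Submodule.Quotient.mk_eq_zero]
      apply Submodule.subset_span
      exact ⟨ω * η, ζ, β, hβ, by rw [mul_assoc]⟩)

/-- Multiplication of the last two factors `Ω ⊗_S Ω ⊗_S Ω → Ω ⊗_S Ω`. -/
def m23 : TQuot k S →ₗ[k] BQuot k S :=
  Submodule.liftQ _ (mkBQ k S ∘ₗ LinearMap.lTensor Ω (LinearMap.mul' k Ω)) (by
    rw [bal3, Submodule.span_le]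
    rintro w (⟨ω, η, ζ, β, hβ, rfl⟩ | ⟨ω, η, ζ, β, hβ, rfl⟩) <;>
      simp only [SetLike.mem_coe, LinearMap.mem_ker, map_sub, LinearMap.comp_apply,
        LinearMap.lTensor_tmul, LinearMap.mul'_apply]
    · rw [mkBQ, Submodule.mkQ_apply, Submodule.mkQ_apply, ← Submodule.Quotient.mk_sub,
        Submodule.Quotient.mk_eq_zero]
      apply Submodule.subset_span
      exact ⟨ω, η * ζ, β, hβ, by rw [mul_assoc]⟩
    · rw [mul_assoc, sub_self])

end BalQ


/-! ### Comodule algebras and Hopf–Galois extensions -/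

/-- A right `H`-comodule algebra structure on `A`. -/
structure ComodAlg (H A : Type) [Ring H] [Bialgebra k H] [Ring A] [Algebra k A] where
  ρ : A →ₗ[k] A ⊗[k] H
  ρ_one : ρ 1 = 1
  ρ_mul : ∀ a b : A, ρ (a * b) = ρ a * ρ b
  counit_ρ : ∀ a : A,
    TensorProduct.rid k A (LinearMap.lTensor A (Coalgebra.counit (R := k) (A := H)) (ρ a)) = a
  coassoc_ρ : ∀ a : A,
    TensorProduct.assoc k A H H (LinearMap.rTensor H ρ (ρ a))
      = LinearMap.lTensor A (Coalgebra.comul (R := k) (A := H)) (ρ a)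

variable {k}

/-- The subalgebra of coinvariant elements `B = A^{co H}`. -/
def ComodAlg.coinv {H A : Type} [Ring H] [Bialgebra k H] [Ring A] [Algebra k A]
    (c : ComodAlg k H A) : Subalgebra k A where
  carrier := {a : A | c.ρ a = a ⊗ₜ[k] (1 : H)}
  mul_mem' := by
    intro a b ha hb
    simp only [Set.mem_setOf_eq] at *
    rw [c.ρ_mul, ha, hb, Algebra.TensorProduct.tmul_mul_tmul, mul_one]
  one_mem' := by
    simpa [Algebra.TensorProduct.one_def] using c.ρ_one
  add_mem' := by
    intro a b ha hb
    simp only [Set.mem_setOf_eq] at *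
    rw [map_add, ha, hb, TensorProduct.add_tmul]
  algebraMap_mem' := by
    intro r
    show c.ρ (algebraMap k A r) = algebraMap k A r ⊗ₜ[k] (1 : H)
    rw [Algebra.algebraMap_eq_smul_one, map_smul, c.ρ_one,
      Algebra.TensorProduct.one_def, smul_tmul']

lemma ComodAlg.mem_coinv {H A : Type} [Ring H] [Bialgebra k H] [Ring A] [Algebra k A]
    (c : ComodAlg k H A) {a : A} : a ∈ c.coinv ↔ c.ρ a = a ⊗ₜ[k] (1 : H) := Iff.rfl

variable (k)

/-- The `B`-balancing relations inside `A ⊗ A`. -/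
def balancer {H A : Type} [Ring H] [Bialgebra k H] [Ring A] [Algebra k A]
    (c : ComodAlg k H A) : Submodule k (A ⊗[k] A) :=
  balQ k (c.coinv : Set A)

/-- The balanced tensor product `A ⊗_B A`. -/
abbrev AtB {H A : Type} [Ring H] [Bialgebra k H] [Ring A] [Algebra k A]
    (c : ComodAlg k H A) : Type :=
  (A ⊗[k] A) ⧸ balancer k c

/-- Projection `A ⊗ A → A ⊗_B A`. -/
def mkAtB {H A : Type} [Ring H] [Bialgebra k H] [Ring A] [Algebra k A]
    (c : ComodAlg k H A) : A ⊗[k] A →ₗ[k] AtB k c :=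
  Submodule.mkQ (balancer k c)

/-- The Galois map before descending to `A ⊗_B A`. -/
def chi0 {H A : Type} [Ring H] [Bialgebra k H] [Ring A] [Algebra k A]
    (c : ComodAlg k H A) : A ⊗[k] A →ₗ[k] A ⊗[k] H :=
  LinearMap.mul' k (A ⊗[k] H) ∘ₗ
    TensorProduct.map (Algebra.TensorProduct.includeLeft (R := k) (S := k)
      (A := A) (B := H)).toLinearMap c.ρ

lemma chi0_tmul {H A : Type} [Ring H] [Bialgebra k H] [Ring A] [Algebra k A]
    (c : ComodAlg k H A) (x y : A) :
    chi0 k c (x ⊗ₜ[k] y) = (x ⊗ₜ[k] (1 : H)) * c.ρ y := by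
  simp [chi0]

lemma balancer_le_ker_chi0 {H A : Type} [Ring H] [Bialgebra k H] [Ring A] [Algebra k A]
    (c : ComodAlg k H A) : balancer k c ≤ LinearMap.ker (chi0 k c) := by
  rw [balancer, balQ, Submodule.span_le]
  rintro x ⟨a, y, b, hb, rfl⟩
  rw [SetLike.mem_coe] at hb
  rw [SetLike.mem_coe, LinearMap.mem_ker, map_sub, chi0_tmul, chi0_tmul,
    c.ρ_mul, c.mem_coinv.mp hb, ← mul_assoc, Algebra.TensorProduct.tmul_mul_tmul,
    mul_one, sub_self]

/-- The canonical Galois map `χ : A ⊗_B A → A ⊗ H`. -/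
def chiQ {H A : Type} [Ring H] [Bialgebra k H] [Ring A] [Algebra k A]
    (c : ComodAlg k H A) : AtB k c →ₗ[k] A ⊗[k] H :=
  Submodule.liftQ (balancer k c) (chi0 k c) (balancer_le_ker_chi0 k c)

/-! ### Faithful flatness over the coinvariant subalgebra -/

/-- `B`-balancing relations in `A ⊗ M` for a left `B`-module `M`. -/
def relBalancer {A : Type} [Ring A] [Algebra k A] (B : Subalgebra k A)
    (M : Type) [AddCommGroup M] [Module k M] [Module B M] [IsScalarTower k B M] :
    Submodule k (A ⊗[k] M) :=
  Submodule.span k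
    {x | ∃ (a : A) (b : B) (m : M), x = (a * (b : A)) ⊗ₜ[k] m - a ⊗ₜ[k] (b • m)}

/-- `A` is a faithfully flat right `B`-module: tensoring over `B` preserves and
reflects injectivity resp. nontriviality. -/
def IsFaithfullyFlatOver {A : Type} [Ring A] [Algebra k A] (B : Subalgebra k A) : Prop :=
  (∀ (M N : Type) [AddCommGroup M] [Module k M] [Module B M] [IsScalarTower k B M]
      [AddCommGroup N] [Module k N] [Module B N] [IsScalarTower k B N]
      (f : M →ₗ[B] N), Function.Injective f →
      ∀ x : A ⊗[k] M,
        LinearMap.lTensor A (f.restrictScalars k) x ∈ relBalancer k B N →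
          x ∈ relBalancer k B M) ∧
  (∀ (M : Type) [AddCommGroup M] [Module k M] [Module B M] [IsScalarTower k B M],
      (⊥ : Submodule k M) ≠ ⊤ → relBalancer k B M ≠ ⊤)

/-- A quantum principal bundle: a faithfully flat Hopf–Galois extension. -/
structure QPB (H A : Type) [Ring H] [HopfAlgebra k H] [Ring A] [Algebra k A]
    extends ComodAlg k H A where
  antipode_bij : Function.Bijective (HopfAlgebra.antipode (R := k) (A := H))
  galois : Function.Bijective (chiQ k toComodAlg)
  ff : IsFaithfullyFlatOver k toComodAlg.coinv


/-- An (ℕ-graded) differential graded algebra over `k`. -/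
structure GDA where
  Ω : Type
  [ring : Ring Ω]
  [alg : Algebra k Ω]
  gr : ℕ → Submodule k Ω
  [graded : GradedAlgebra gr]
  d : Ω →ₗ[k] Ω
  d_d : ∀ x, d (d x) = 0
  d_mem : ∀ n, ∀ x ∈ gr n, d x ∈ gr (n + 1)
  leibniz : ∀ n, ∀ x ∈ gr n, ∀ y, d (x * y) = d x * y + ((-1 : k) ^ n) • (x * d y)

attribute [instance] GDA.ring GDA.alg GDA.graded

/-- A differential calculus on the algebra `A`: a DGA with `Ω⁰ = A` which is
generated in the sense `Ωⁿ = span { a⁰ da¹ ∧ ⋯ ∧ daⁿ }`. -/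
structure DC (A : Type) [Ring A] [Algebra k A] extends GDA k where
  ι : A →ₐ[k] Ω
  ι_inj : Function.Injective ι
  gr_zero : gr 0 = LinearMap.range ι.toLinearMap
  gr_succ : ∀ n : ℕ, gr (n + 1) = Submodule.span k
    {x | ∃ (a : A) (f : Fin (n + 1) → A),
      x = ι a * (List.ofFn fun i => d (ι (f i))).prod}

variable {k}

/-- The Koszul sign operator `J x = (-1)^{|x|} x`. -/
def GDA.J (D : GDA k) : D.Ω →ₗ[k] D.Ω :=
  (DirectSum.toModule k ℕ D.Ω fun n => ((-1 : k) ^ n) • (D.gr n).subtype) ∘ₗ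
    (DirectSum.decomposeLinearEquiv D.gr).toLinearMap

/-- The Koszul braiding flip `x ⊗ y ↦ (-1)^{|x||y|} y ⊗ x`. -/
def koszulFlip (D E : GDA k) : D.Ω ⊗[k] E.Ω →ₗ[k] E.Ω ⊗[k] D.Ω :=
  (DirectSum.toModule k ℕ (E.Ω ⊗[k] D.Ω) fun n =>
      (TensorProduct.comm k D.Ω E.Ω).toLinearMap ∘ₗ
        TensorProduct.map (D.gr n).subtype (E.J ^ n)) ∘ₗ
    (TensorProduct.directSumLeft k k (fun n => D.gr n) E.Ω).toLinearMap ∘ₗ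
    LinearMap.rTensor E.Ω (DirectSum.decomposeLinearEquiv D.gr).toLinearMap

/-- Multiplication of the graded (Koszul-signed) tensor product algebra
`Ω(D) ⊗ Ω(E)`: `(x ⊗ h)(y ⊗ g) = (-1)^{|h||y|} (xy) ⊗ (hg)`. -/
def gmulT (D E : GDA k) :
    (D.Ω ⊗[k] E.Ω) ⊗[k] (D.Ω ⊗[k] E.Ω) →ₗ[k] D.Ω ⊗[k] E.Ω :=
  TensorProduct.map (LinearMap.mul' k D.Ω) (LinearMap.mul' k E.Ω) ∘ₗ
    (TensorProduct.assoc k D.Ω D.Ω (E.Ω ⊗[k] E.Ω)).symm.toLinearMap ∘ₗ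
    LinearMap.lTensor D.Ω (TensorProduct.assoc k D.Ω E.Ω E.Ω).toLinearMap ∘ₗ
    LinearMap.lTensor D.Ω (LinearMap.rTensor E.Ω (koszulFlip E D)) ∘ₗ
    LinearMap.lTensor D.Ω (TensorProduct.assoc k E.Ω D.Ω E.Ω).symm.toLinearMap ∘ₗ
    (TensorProduct.assoc k D.Ω E.Ω (D.Ω ⊗[k] E.Ω)).toLinearMap

/-- The differential of the graded tensor product:
`d⊗(x ⊗ y) = dx ⊗ y + (-1)^{|x|} x ⊗ dy`. -/
def dT (D E : GDA k) : D.Ω ⊗[k] E.Ω →ₗ[k] D.Ω ⊗[k] E.Ω :=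
  LinearMap.rTensor E.Ω D.d + TensorProduct.map D.J E.d

/-- Projection of a differential calculus onto its degree-zero part `A`. -/
def DC.p0 {A : Type} [Ring A] [Algebra k A] (D : DC k A) : D.Ω →ₗ[k] A :=
  (LinearEquiv.ofInjective D.ι.toLinearMap D.ι_inj).symm.toLinearMap ∘ₗ
    (LinearEquiv.ofEq _ _ D.gr_zero).toLinearMap ∘ₗ
    DirectSum.component k ℕ (fun n => D.gr n) 0 ∘ₗ
    (DirectSum.decomposeLinearEquiv D.gr).toLinearMap


variable (k)

/-! ### First order differential calculi -/

/-- A first order differential calculus `(Ω¹(A), d)` on `A`, realized on the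
`A`-bimodule `V`. -/
structure FODC (A V : Type) [Ring A] [Algebra k A] [AddCommGroup V] [Module k V] where
  lact : A →ₗ[k] V →ₗ[k] V
  ract : A →ₗ[k] V →ₗ[k] V
  lact_one : lact 1 = LinearMap.id
  lact_mul : ∀ a b : A, lact (a * b) = lact a ∘ₗ lact b
  ract_one : ract 1 = LinearMap.id
  ract_mul : ∀ a b : A, ract (a * b) = ract b ∘ₗ ract a
  lr_comm : ∀ (a b : A) (v : V), lact a (ract b v) = ract b (lact a v)
  d : A →ₗ[k] V
  leibniz : ∀ a b : A, d (a * b) = lact a (d b) + ract b (d a)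
  span_eq : Submodule.span k {x : V | ∃ a b : A, x = lact a (d b)} = ⊤

/-- Auxiliary action of `A ⊗ H` on `V ⊗ H`:
`(a ⊗ h) ⋅ (v ⊗ g) = (act a v) ⊗ (mulH h g)`. -/
def actT {A H V : Type} [AddCommGroup A] [Module k A] [AddCommGroup H] [Module k H]
    [AddCommGroup V] [Module k V]
    (act : A →ₗ[k] V →ₗ[k] V) (mulH : H →ₗ[k] H →ₗ[k] H) :
    A ⊗[k] H →ₗ[k] (V ⊗[k] H) →ₗ[k] V ⊗[k] H :=
  TensorProduct.lift ((TensorProduct.mapBilinear (RingHom.id k) V H V H).compl₁₂ act mulH)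

/-- Auxiliary action of `H ⊗ A` on `H ⊗ V`:
`(h ⊗ a) ⋅ (g ⊗ v) = (mulH h g) ⊗ (act a v)`. -/
def actTL {A H V : Type} [AddCommGroup A] [Module k A] [AddCommGroup H] [Module k H]
    [AddCommGroup V] [Module k V]
    (act : A →ₗ[k] V →ₗ[k] V) (mulH : H →ₗ[k] H →ₗ[k] H) :
    H ⊗[k] A →ₗ[k] (H ⊗[k] V) →ₗ[k] H ⊗[k] V :=
  TensorProduct.lift ((TensorProduct.mapBilinear (RingHom.id k) H V H V).compl₁₂ mulH act)

section Covariant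
variable {H A : Type} [Ring H] [Bialgebra k H] [Ring A] [Algebra k A]

/-- A right `H`-covariant FODC on the right `H`-comodule algebra `A`. -/
structure RCovFODC (c : ComodAlg k H A) (V : Type) [AddCommGroup V] [Module k V]
    extends FODC k A V where
  ρV : V →ₗ[k] V ⊗[k] H
  ρV_counit : ∀ v, TensorProduct.rid k V
    (LinearMap.lTensor V (Coalgebra.counit (R := k) (A := H)) (ρV v)) = v
  ρV_coassoc : ∀ v, TensorProduct.assoc k V H H (LinearMap.rTensor H ρV (ρV v))
    = LinearMap.lTensor V (Coalgebra.comul (R := k) (A := H)) (ρV v)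
  ρV_d : ∀ a : A, ρV (d a) = LinearMap.rTensor H d (c.ρ a)
  ρV_l : ∀ (a : A) (v : V),
    ρV (lact a v) = actT k lact (LinearMap.mul k H) (c.ρ a) (ρV v)
  ρV_r : ∀ (a : A) (v : V),
    ρV (ract a v) = actT k ract ((LinearMap.mul k H).flip) (c.ρ a) (ρV v)

/-- A left `H`-covariant FODC on the Hopf algebra `H` itself. -/
structure LCovFODC (V : Type) [AddCommGroup V] [Module k V]
    extends FODC k H V where
  lam : V →ₗ[k] H ⊗[k] V
  lam_counit : ∀ v, TensorProduct.lid k V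
    (LinearMap.rTensor V (Coalgebra.counit (R := k) (A := H)) (lam v)) = v
  lam_coassoc : ∀ v, (TensorProduct.assoc k H H V).symm
      (LinearMap.lTensor H lam (lam v))
    = LinearMap.rTensor V (Coalgebra.comul (R := k) (A := H)) (lam v)
  lam_d : ∀ h : H, lam (d h) = LinearMap.lTensor H d (Coalgebra.comul (R := k) h)
  lam_l : ∀ (h : H) (v : V), lam (lact h v)
    = actTL k lact (LinearMap.mul k H) (Coalgebra.comul (R := k) h) (lam v)
  lam_r : ∀ (h : H) (v : V), lam (ract h v)
    = actTL k ract ((LinearMap.mul k H).flip) (Coalgebra.comul (R := k) h) (lam v)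

/-- The right coaction data making a left covariant FODC on `H` bicovariant. -/
structure BicovStruct {V : Type} [AddCommGroup V] [Module k V]
    (L : LCovFODC k (H := H) V) where
  ρV : V →ₗ[k] V ⊗[k] H
  ρV_counit : ∀ v, TensorProduct.rid k V
    (LinearMap.lTensor V (Coalgebra.counit (R := k) (A := H)) (ρV v)) = v
  ρV_coassoc : ∀ v, TensorProduct.assoc k V H H (LinearMap.rTensor H ρV (ρV v))
    = LinearMap.lTensor V (Coalgebra.comul (R := k) (A := H)) (ρV v)
  ρV_d : ∀ h : H, ρV (L.d h) = LinearMap.rTensor H L.d (Coalgebra.comul (R := k) h)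
  ρV_l : ∀ (h : H) (v : V),
    ρV (L.lact h v) = actT k L.lact (LinearMap.mul k H) (Coalgebra.comul (R := k) h) (ρV v)
  ρV_r : ∀ (h : H) (v : V),
    ρV (L.ract h v) = actT k L.ract ((LinearMap.mul k H).flip) (Coalgebra.comul (R := k) h) (ρV v)
  bicomod : ∀ v, LinearMap.lTensor H ρV (L.lam v)
    = TensorProduct.assoc k H V H (LinearMap.rTensor H L.lam (ρV v))

end Covariant

/-! ### Maximal prolongations -/

section MaxProl
variable {k}
variable {A : Type} [Ring A] [Algebra k A]

/-- A realization of a DC as an extension of a given FODC. -/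
structure ExtendsFODC {V : Type} [AddCommGroup V] [Module k V]
    (D : DC k A) (F : FODC k A V) where
  j : V →ₗ[k] D.Ω
  j_inj : Function.Injective j
  j_range : LinearMap.range j = D.gr 1
  j_d : ∀ a : A, j (F.d a) = D.d (D.ι a)
  j_l : ∀ (a : A) (v : V), j (F.lact a v) = D.ι a * j v
  j_r : ∀ (a : A) (v : V), j (F.ract a v) = j v * D.ι a

/-- `D` is the maximal prolongation of the FODC `F`: it extends `F` and every
other extension is a quotient of it. -/
def IsMaxProlongation {V : Type} [AddCommGroup V] [Module k V]
    (D : DC k A) (F : FODC k A V) : Prop :=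
  Nonempty (ExtendsFODC D F) ∧
  ∀ (D' : DC k A) (e : ExtendsFODC D F) (e' : ExtendsFODC D' F),
    ∃ φ : D.Ω →ₐ[k] D'.Ω, Function.Surjective φ ∧
      (∀ a : A, φ (D.ι a) = D'.ι a) ∧
      (∀ x, φ (D.d x) = D'.d (φ x)) ∧
      (∀ n, ∀ x ∈ D.gr n, φ x ∈ D'.gr n) ∧
      (∀ v : V, φ (e.j v) = e'.j v)

end MaxProl

/-! ### The adjoint coaction and graded Hopf calculi -/

section HopfSide
variable {k}
variable {H : Type} [Ring H] [HopfAlgebra k H]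

/-- The (right) adjoint coaction `Ad(h) = h₂ ⊗ S(h₁) h₃`. -/
def AdMap : H →ₗ[k] H ⊗[k] H :=
  LinearMap.lTensor H (LinearMap.mul' k H) ∘ₗ
    (TensorProduct.assoc k H H H).toLinearMap ∘ₗ
    LinearMap.rTensor H ((TensorProduct.comm k H H).toLinearMap ∘ₗ
      LinearMap.rTensor H (HopfAlgebra.antipode (R := k))) ∘ₗ
    LinearMap.rTensor H (Coalgebra.comul (R := k)) ∘ₗ
    Coalgebra.comul (R := k)

variable (k) in
/-- A differential calculus on `H` which is a differential graded Hopf algebra,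
as is the case for the maximal prolongation of a bicovariant FODC. -/
structure DGHopf extends DC k H where
  Δg : Ω →ₗ[k] Ω ⊗[k] Ω
  εg : Ω →ₗ[k] k
  Sg : Ω →ₗ[k] Ω
  Δg_one : Δg 1 = 1 ⊗ₜ[k] 1
  Δg_mul : ∀ x y : Ω, Δg (x * y) = gmulT toGDA toGDA (Δg x ⊗ₜ[k] Δg y)
  Δg_d : ∀ x : Ω, Δg (d x) = dT toGDA toGDA (Δg x)
  Δg_zero : ∀ h : H, Δg (ι h)
    = TensorProduct.map ι.toLinearMap ι.toLinearMap (Coalgebra.comul (R := k) h)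
  Δg_coassoc : ∀ x : Ω, TensorProduct.assoc k Ω Ω Ω (LinearMap.rTensor Ω Δg (Δg x))
    = LinearMap.lTensor Ω Δg (Δg x)
  Δg_counit_l : ∀ x : Ω, TensorProduct.lid k Ω (LinearMap.rTensor Ω εg (Δg x)) = x
  Δg_counit_r : ∀ x : Ω, TensorProduct.rid k Ω (LinearMap.lTensor Ω εg (Δg x)) = x
  εg_zero : ∀ h : H, εg (ι h) = Coalgebra.counit (R := k) h
  εg_pos : ∀ n, ∀ x ∈ gr (n + 1), εg x = 0
  Sg_antipode_l : ∀ x : Ω,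
    LinearMap.mul' k Ω (TensorProduct.map Sg LinearMap.id (Δg x)) = algebraMap k Ω (εg x)
  Sg_antipode_r : ∀ x : Ω,
    LinearMap.mul' k Ω (TensorProduct.map LinearMap.id Sg (Δg x)) = algebraMap k Ω (εg x)
  Sg_zero : ∀ h : H, Sg (ι h) = ι (HopfAlgebra.antipode (R := k) h)
  Sg_d : ∀ x : Ω, Sg (d x) = d (Sg x)
  Δg_grade : ∀ n, ∀ x ∈ gr n, Δg x ∈
    ⨆ p : {p : ℕ × ℕ // p.1 + p.2 = n},
      LinearMap.range (TensorProduct.map (gr p.1.1).subtype (gr p.1.2).subtype)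

namespace DGHopf

variable (D : DGHopf k (H := H))

/-- The left coaction of `H` on `Ω•(H)`, i.e. the degree `(0,•)` part of `Δg`. -/
def lamG : D.Ω →ₗ[k] H ⊗[k] D.Ω :=
  TensorProduct.map D.p0 LinearMap.id ∘ₗ D.Δg

/-- The left coinvariant forms `Λ• ⊆ Ω•(H)`. -/
def lamSub : Submodule k D.Ω :=
  LinearMap.ker (D.lamG - TensorProduct.mk k H D.Ω 1)

/-- The left coinvariant one-forms `Λ¹`. -/
def lam1 : Submodule k D.Ω := D.lamSub ⊓ D.gr 1

/-- The (quantum) Cartan–Maurer form `ϖ(h) = S(h₁) d(h₂)`, extended to `H`. -/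
def varpi : H →ₗ[k] D.Ω :=
  TensorProduct.lift
    (((LinearMap.mul k D.Ω ∘ₗ D.ι.toLinearMap ∘ₗ
        (HopfAlgebra.antipode (R := k))).compl₂ (D.d ∘ₗ D.ι.toLinearMap))) ∘ₗ
    Coalgebra.comul (R := k)

/-- The graded adjoint coaction
`Ad•(ω) = (-1)^{|ω₁||ω₂|} ω₂ ⊗ S•(ω₁) ∧ ω₃`. -/
def AdG : D.Ω →ₗ[k] D.Ω ⊗[k] D.Ω :=
  LinearMap.lTensor D.Ω (LinearMap.mul' k D.Ω ∘ₗ LinearMap.rTensor D.Ω D.Sg) ∘ₗ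
    (TensorProduct.assoc k D.Ω D.Ω D.Ω).toLinearMap ∘ₗ
    LinearMap.rTensor D.Ω (koszulFlip D.toGDA D.toGDA) ∘ₗ
    LinearMap.rTensor D.Ω D.Δg ∘ₗ D.Δg

end DGHopf
end HopfSide

/-! ### Complete calculi -/

section Complete
variable {k}
variable {H A : Type} [Ring H] [HopfAlgebra k H] [Ring A] [Algebra k A]

variable (k) in
/-- A complete calculus: the coaction of a comodule algebra extends to a
morphism of differential graded algebras `Ω•(A) → Ω•(A) ⊗ Ω•(H)`. -/
structure Complete (c : ComodAlg k H A) (DA : DC k A) (DH : DGHopf k (H := H)) where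
  Δc : DA.Ω →ₗ[k] DA.Ω ⊗[k] DH.Ω
  Δc_one : Δc 1 = 1 ⊗ₜ[k] 1
  Δc_mul : ∀ x y : DA.Ω, Δc (x * y) = gmulT DA.toGDA DH.toGDA (Δc x ⊗ₜ[k] Δc y)
  Δc_d : ∀ x : DA.Ω, Δc (DA.d x) = dT DA.toGDA DH.toGDA (Δc x)
  Δc_zero : ∀ a : A, Δc (DA.ι a)
    = TensorProduct.map DA.ι.toLinearMap DH.ι.toLinearMap (c.ρ a)
  Δc_grade : ∀ n, ∀ x ∈ DA.gr n, Δc x ∈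
    ⨆ p : {p : ℕ × ℕ // p.1 + p.2 = n},
      LinearMap.range (TensorProduct.map (DA.gr p.1.1).subtype (DH.gr p.1.2).subtype)

namespace Complete

variable {c : ComodAlg k H A} {DA : DC k A} {DH : DGHopf k (H := H)}
variable (E : Complete k c DA DH)

/-- The first order part of the extended coaction: a right `H`-coaction on `Ω•(A)`. -/
def ρΩ : DA.Ω →ₗ[k] DA.Ω ⊗[k] H :=
  LinearMap.lTensor DA.Ω DH.p0 ∘ₗ E.Δc

/-- The basic forms `Ω•(B) = Ω•(A)^{co Ω•(H)}`. -/
def basic : Submodule k DA.Ω :=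
  LinearMap.ker (E.Δc - (TensorProduct.mk k DA.Ω DH.Ω).flip 1)

/-- The horizontal forms `hor• = (Δ•)⁻¹(Ω•(A) ⊗ H)`. -/
def hor : Submodule k DA.Ω :=
  Submodule.comap E.Δc (LinearMap.range (LinearMap.lTensor DA.Ω DH.ι.toLinearMap))

end Complete

/-- The map `κ : a ⊗ ω ↦ a₀ ⊗ S(a₁) ω`. -/
def kappa (c : ComodAlg k H A) (DH : DGHopf k (H := H)) :
    A ⊗[k] DH.Ω →ₗ[k] A ⊗[k] DH.Ω :=
  LinearMap.lTensor A (LinearMap.mul' k DH.Ω ∘ₗ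
      LinearMap.rTensor DH.Ω (DH.ι.toLinearMap ∘ₗ HopfAlgebra.antipode (R := k))) ∘ₗ
    (TensorProduct.assoc k A H DH.Ω).toLinearMap ∘ₗ
    LinearMap.rTensor DH.Ω c.ρ

namespace Complete
variable {c : ComodAlg k H A} {DA : DC k A} {DH : DGHopf k (H := H)}
variable (E : Complete k c DA DH)

/-- The vertical projection `π_v : Ω•(A) → A ⊗ Λ• ⊆ A ⊗ Ω•(H)`. -/
def piv : DA.Ω →ₗ[k] A ⊗[k] DH.Ω :=
  kappa c DH ∘ₗ TensorProduct.map DA.p0 LinearMap.id ∘ₗ E.Δc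

end Complete
end Complete

/-! ### The Đurđević braiding via the Galois map -/

section Durd
variable {k}
variable {H A : Type} [Ring H] [HopfAlgebra k H] [Ring A] [Algebra k A]

/-- The map `a ⊗ c ↦ a₀ c ⊗ a₁`, i.e. `χ ∘ σ` for the Đurđević braiding. -/
def durdGalois (c : ComodAlg k H A) : A ⊗[k] A →ₗ[k] A ⊗[k] H :=
  LinearMap.rTensor H (LinearMap.mul' k A) ∘ₗ
    (TensorProduct.assoc k A A H).symm.toLinearMap ∘ₗ
    LinearMap.lTensor A (TensorProduct.comm k H A).toLinearMap ∘ₗ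
    (TensorProduct.assoc k A H A).toLinearMap ∘ₗ
    LinearMap.rTensor A c.ρ

/-- The graded analogue `ω ⊗ η ↦ (-1)^{|η||ω₁|} (ω₀ ∧ η) ⊗ ω₁`, i.e.
`χ• ∘ σ•` for the extended Đurđević braiding. -/
def durdGaloisG {c : ComodAlg k H A} {DA : DC k A} {DH : DGHopf k (H := H)}
    (E : Complete k c DA DH) : DA.Ω ⊗[k] DA.Ω →ₗ[k] DA.Ω ⊗[k] DH.Ω :=
  LinearMap.rTensor DH.Ω (LinearMap.mul' k DA.Ω) ∘ₗ
    (TensorProduct.assoc k DA.Ω DA.Ω DH.Ω).symm.toLinearMap ∘ₗ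
    LinearMap.lTensor DA.Ω (koszulFlip DH.toGDA DA.toGDA) ∘ₗ
    (TensorProduct.assoc k DA.Ω DH.Ω DA.Ω).toLinearMap ∘ₗ
    LinearMap.rTensor DA.Ω E.Δc

end Durd

/-! ### Gauge transformations and connections -/

section Gauge
variable {k}
variable {H A : Type} [Ring H] [HopfAlgebra k H] [Ring A] [Algebra k A]

/-- A gauge transformation: unital, convolution invertible, and colinear with
respect to the adjoint coaction. -/
def IsGauge (c : ComodAlg k H A) (f : H →ₗ[k] A) : Prop :=
  IsConvInvertible k f ∧ f 1 = 1 ∧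
    ∀ h : H, c.ρ (f h) = LinearMap.rTensor H f (AdMap h)

/-- A vertical automorphism: a unital left `B`-linear right `H`-colinear
bijection of `A`. -/
def IsVertAut (c : ComodAlg k H A) (F : A →ₗ[k] A) : Prop :=
  Function.Bijective F ∧ (∀ b ∈ c.coinv, ∀ a, F (b * a) = b * F a) ∧ F 1 = 1 ∧
    ∀ a, c.ρ (F a) = LinearMap.rTensor H F (c.ρ a)

variable {DA : DC k A} {DH : DGHopf k (H := H)}

/-- Convolution product with respect to the graded coproduct. -/
def convG (DH : DGHopf k (H := H)) {P : Type} [Ring P] [Algebra k P]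
    (f g : DH.Ω →ₗ[k] P) : DH.Ω →ₗ[k] P :=
  LinearMap.mul' k P ∘ₗ TensorProduct.map f g ∘ₗ DH.Δg

/-- Convolution unit with respect to the graded counit. -/
def convGUnit (DH : DGHopf k (H := H)) {P : Type} [Ring P] [Algebra k P] :
    DH.Ω →ₗ[k] P :=
  Algebra.linearMap k P ∘ₗ DH.εg

/-- A map `Ω•(H) → Ω•(A)` of degree zero. -/
def IsDeg0 (DH : DGHopf k (H := H)) (DA : DC k A) (f : DH.Ω →ₗ[k] DA.Ω) : Prop :=
  ∀ n, ∀ x ∈ DH.gr n, f x ∈ DA.gr n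

/-- The degree-zero component `f⁰ : H → A` of a degree-zero map. -/
def deg0Part (DH : DGHopf k (H := H)) (DA : DC k A) (f : DH.Ω →ₗ[k] DA.Ω) :
    H →ₗ[k] A :=
  DA.p0 ∘ₗ f ∘ₗ DH.ι.toLinearMap

section WithComplete
variable {c : ComodAlg k H A} (E : Complete k c DA DH)

/-- A graded gauge transformation. -/
def IsGradedGauge (f : DH.Ω →ₗ[k] DA.Ω) : Prop :=
  IsDeg0 DH DA f ∧
  (∃ g : DH.Ω →ₗ[k] DA.Ω, IsDeg0 DH DA g ∧
      convG DH f g = convGUnit DH ∧ convG DH g f = convGUnit DH) ∧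
  f 1 = 1 ∧
  ∀ ω, E.Δc (f ω) = LinearMap.rTensor DH.Ω f (DH.AdG ω)

/-- A graded vertical automorphism. -/
def IsGradedVertAut (F : DA.Ω →ₗ[k] DA.Ω) : Prop :=
  (∀ n, ∀ x ∈ DA.gr n, F x ∈ DA.gr n) ∧ Function.Bijective F ∧
  (∀ β ∈ E.basic, ∀ x, F (β * x) = β * F x) ∧ F 1 = 1 ∧
  ∀ x, E.Δc (F x) = LinearMap.rTensor DH.Ω F (E.Δc x)

/-- The right hand side `h ↦ s(ϖ(π_ε(h₂))) ⊗ S(h₁)h₃` of the colinearity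
condition for connection 1-forms. -/
def connRHSg (s : DH.Ω →ₗ[k] DA.Ω) : H →ₗ[k] DA.Ω ⊗[k] H :=
  TensorProduct.map (s ∘ₗ DH.varpi)
      (LinearMap.mul' k H ∘ₗ LinearMap.rTensor H (HopfAlgebra.antipode (R := k))) ∘ₗ
    (TensorProduct.assoc k H H H).toLinearMap ∘ₗ
    LinearMap.rTensor H (TensorProduct.comm k H H).toLinearMap ∘ₗ
    LinearMap.rTensor H (Coalgebra.comul (R := k)) ∘ₗ
    Coalgebra.comul (R := k)

/-- A connection 1-form on a quantum principal bundle with complete calculus. -/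
def IsConnForm (s : DH.Ω →ₗ[k] DA.Ω) : Prop :=
  (∀ θ ∈ DH.lam1, s θ ∈ DA.gr 1) ∧
  (∀ h : H, E.ρΩ (s (DH.varpi h)) = connRHSg s h) ∧
  (∀ θ ∈ DH.lam1, E.piv (s θ) = (1 : A) ⊗ₜ[k] θ)

/-- The curvature `R_s(h) = d s(ϖ(h)) + s(ϖ(π_ε(h₁))) ∧ s(ϖ(π_ε(h₂)))`. -/
def curvature (s : DH.Ω →ₗ[k] DA.Ω) : H →ₗ[k] DA.Ω :=
  DA.d ∘ₗ s ∘ₗ DH.varpi +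
    LinearMap.mul' k DA.Ω ∘ₗ
      TensorProduct.map (s ∘ₗ DH.varpi) (s ∘ₗ DH.varpi) ∘ₗ Coalgebra.comul (R := k)

/-- The `Ω•(B)`-balancing relations in `Ω•(A) ⊗ Ω•(A)`. -/
def basicBalancer : Submodule k (DA.Ω ⊗[k] DA.Ω) :=
  balQ k (E.basic : Set DA.Ω)

/-- The graded Galois map `χ• : ω ⊗ η ↦ ω ∧ η₍₀₎ ⊗ η₍₁₎` before descending to
`Ω•(A) ⊗_{Ω•(B)} Ω•(A)`. -/
def chi0g : DA.Ω ⊗[k] DA.Ω →ₗ[k] DA.Ω ⊗[k] DH.Ω :=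
  gmulT DA.toGDA DH.toGDA ∘ₗ
    TensorProduct.map ((TensorProduct.mk k DA.Ω DH.Ω).flip 1) E.Δc

end WithComplete
end Gauge

/-! ### First-order machinery -/

section FirstOrder
variable {k}
variable {H A : Type} [Ring H] [HopfAlgebra k H] [Ring A] [Algebra k A]
variable {VA VH : Type} [AddCommGroup VA] [Module k VA] [AddCommGroup VH] [Module k VH]
variable {c : ComodAlg k H A}

/-- The left coinvariant elements `Λ¹` of a left covariant FODC on `H`. -/
def Lam1 (L : LCovFODC k (H := H) VH) : Submodule k VH :=
  LinearMap.ker (L.lam - TensorProduct.mk k H VH 1)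

/-- The Cartan–Maurer form `ϖ(h) = S(h₁) ⋅ d(h₂)` of a left covariant FODC. -/
def varpi1 (L : LCovFODC k (H := H) VH) : H →ₗ[k] VH :=
  TensorProduct.lift
    ((L.lact ∘ₗ HopfAlgebra.antipode (R := k)).compl₂ L.d) ∘ₗ
    Coalgebra.comul (R := k)

/-- The map `a' ↦ a'₀ ⊗ S(a'₁) ⋅ d(a'₂)`. -/
def nuMap (c : ComodAlg k H A) (L : LCovFODC k (H := H) VH) : A →ₗ[k] A ⊗[k] VH :=
  LinearMap.lTensor A
      (TensorProduct.lift ((L.lact ∘ₗ HopfAlgebra.antipode (R := k)).compl₂ L.d)) ∘ₗ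
    (TensorProduct.assoc k A H H).toLinearMap ∘ₗ
    LinearMap.rTensor H c.ρ ∘ₗ c.ρ

/-- A first order complete calculus: the vertical projection
`π_v(a ⋅ d a') = a a'₀ ⊗ S(a'₁) d a'₂` is well defined. -/
structure FOComplete (c : ComodAlg k H A) (FA : RCovFODC k c VA)
    (LH : LCovFODC k (H := H) VH) where
  pv : VA →ₗ[k] A ⊗[k] VH
  pv_eq : ∀ a a' : A, pv (FA.lact a (FA.d a'))
    = LinearMap.rTensor VH (LinearMap.mulLeft k a) (nuMap c LH a')

/-- Colinearity right hand side for first-order connection forms. -/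
def connRHS1 (LH : LCovFODC k (H := H) VH) (_FA : RCovFODC k c VA)
    (s : VH →ₗ[k] VA) : H →ₗ[k] VA ⊗[k] H :=
  TensorProduct.map (s ∘ₗ varpi1 LH)
      (LinearMap.mul' k H ∘ₗ LinearMap.rTensor H (HopfAlgebra.antipode (R := k))) ∘ₗ
    (TensorProduct.assoc k H H H).toLinearMap ∘ₗ
    LinearMap.rTensor H (TensorProduct.comm k H H).toLinearMap ∘ₗ
    LinearMap.rTensor H (Coalgebra.comul (R := k)) ∘ₗ
    Coalgebra.comul (R := k)

/-- A connection 1-form for a first order complete calculus. -/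
def IsConnForm1 {c : ComodAlg k H A} (FA : RCovFODC k c VA)
    (LH : LCovFODC k (H := H) VH) (E : FOComplete c FA LH)
    (s : VH →ₗ[k] VA) : Prop :=
  (∀ h : H, FA.ρV (s (varpi1 LH h)) = connRHS1 LH FA s h) ∧
  (∀ θ ∈ Lam1 LH, E.pv (s θ) = (1 : A) ⊗ₜ[k] θ)

end FirstOrder

/-! ### The regular comodule algebra and bicovariant prolongations -/

section Reg
variable {k}
variable (H : Type) [Ring H] [HopfAlgebra k H]

variable (k) in
/-- `H` as a right comodule algebra over itself via the comultiplication. -/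
def regCA : ComodAlg k H H where
  ρ := Coalgebra.comul
  ρ_one := Bialgebra.comul_one
  ρ_mul := fun a b => Bialgebra.comul_mul a b
  counit_ρ := by
    intro a
    have h := LinearMap.congr_fun
      (Coalgebra.lTensor_counit_comp_comul (R := k) (A := H)) a
    simp only [LinearMap.comp_apply] at h
    rw [h]
    simp
  coassoc_ρ := by
    intro a
    have h := LinearMap.congr_fun (Coalgebra.coassoc (R := k) (A := H)) a
    simp only [LinearMap.comp_apply, LinearEquiv.coe_coe] at h
    exact h

variable {H} in
/-- `D` is the maximal prolongation of some bicovariant FODC on `H`. -/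
def DGHopf.IsMaxProlOfBicov (D : DGHopf k (H := H)) : Prop :=
  ∃ (V : Type) (_ : AddCommGroup V) (_ : Module k V) (L : LCovFODC k (H := H) V),
    Nonempty (BicovStruct k L) ∧ IsMaxProlongation D.toDC L.toFODC

end Reg

/-! ### Auxiliary convolution lemmas -/

section ConvAux

variable {C P : Type} [AddCommGroup C] [Module k C] [Coalgebra k C]
  [Ring P] [Algebra k P]

lemma convUnit_apply (x : C) :
    (convUnit k : C →ₗ[k] P) x = algebraMap k P (Coalgebra.counit (R := k) x) := rfl

lemma conv_apply_repr (f g : C →ₗ[k] P) {ι : Type} {x : C} (r : Coalgebra.Repr k x ι) :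
    conv k f g x = ∑ i ∈ r.index, f (r.left i) * g (r.right i) := by
  rw [conv, LinearMap.comp_apply, LinearMap.comp_apply,
    show Coalgebra.comul (R := k) x = ∑ i ∈ r.index, r.left i ⊗ₜ[k] r.right i from r.eq.symm,
    map_sum, map_sum]
  simp

lemma conv_convUnit_right (f : C →ₗ[k] P) : conv k f (convUnit k) = f := by
  apply LinearMap.ext; intro x
  set r := Coalgebra.Repr.arbitrary k x with hr
  have h1 := congrArg (TensorProduct.rid k C) (Coalgebra.sum_tmul_counit_eq (R := k) r)
  simp only [map_sum, TensorProduct.rid_tmul, one_smul] at h1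
  rw [conv_apply_repr k f _ r]
  simp only [convUnit_apply]
  calc ∑ i ∈ r.index, f (r.left i) * algebraMap k P (Coalgebra.counit (R := k) (r.right i))
      = ∑ i ∈ r.index, f (Coalgebra.counit (R := k) (r.right i) • r.left i) :=
        Finset.sum_congr rfl fun i _ => by rw [map_smul, Algebra.smul_def, Algebra.commutes]
    _ = f x := by rw [← map_sum, h1]

lemma conv_convUnit_left (f : C →ₗ[k] P) : conv k (convUnit k) f = f := by
  apply LinearMap.ext; intro x
  set r := Coalgebra.Repr.arbitrary k x with hr
  have h1 := congrArg (TensorProduct.lid k C) (Coalgebra.sum_counit_tmul_eq (R := k) r)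
  simp only [map_sum, TensorProduct.lid_tmul, one_smul] at h1
  rw [conv_apply_repr k _ f r]
  simp only [convUnit_apply]
  calc ∑ i ∈ r.index, algebraMap k P (Coalgebra.counit (R := k) (r.left i)) * f (r.right i)
      = ∑ i ∈ r.index, f (Coalgebra.counit (R := k) (r.left i) • r.right i) :=
        Finset.sum_congr rfl fun i _ => by rw [map_smul, Algebra.smul_def]
    _ = f x := by rw [← map_sum, h1]

lemma conv_assoc (f g h : C →ₗ[k] P) :
    conv k (conv k f g) h = conv k f (conv k g h) := by
  apply LinearMap.ext; intro x
  classical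
  set r := Coalgebra.Repr.arbitrary k x with hr
  set a₁ : (i : C × C) → Coalgebra.Repr k (r.left i) (C × C) :=
    fun i => Coalgebra.Repr.arbitrary k _ with ha₁
  set a₂ : (i : C × C) → Coalgebra.Repr k (r.right i) (C × C) :=
    fun i => Coalgebra.Repr.arbitrary k _ with ha₂
  have key := congrArg (LinearMap.mul' k P ∘ₗ
      TensorProduct.map f (LinearMap.mul' k P ∘ₗ TensorProduct.map g h))
    (Coalgebra.sum_tmul_tmul_eq r a₁ a₂)
  simp only [map_sum, LinearMap.comp_apply, TensorProduct.map_tmul,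
    LinearMap.mul'_apply] at key
  rw [conv_apply_repr k _ h r, conv_apply_repr k f _ r]
  calc ∑ i ∈ r.index, conv k f g (r.left i) * h (r.right i)
      = ∑ i ∈ r.index, ∑ j ∈ (a₁ i).index,
          f ((a₁ i).left j) * ((g ((a₁ i).right j)) * h (r.right i)) := by
        refine Finset.sum_congr rfl fun i _ => ?_
        rw [conv_apply_repr k f g (a₁ i), Finset.sum_mul]
        exact Finset.sum_congr rfl fun j _ => mul_assoc _ _ _
    _ = ∑ i ∈ r.index, ∑ j ∈ (a₂ i).index,
          f (r.left i) * (g ((a₂ i).left j) * h ((a₂ i).right j)) := key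
    _ = ∑ i ∈ r.index, f (r.left i) * conv k g h (r.right i) := by
        refine Finset.sum_congr rfl fun i _ => ?_
        rw [conv_apply_repr k g h (a₂ i), Finset.mul_sum]

lemma conv_inv_unique {f g g' : C →ₗ[k] P}
    (h1 : conv k f g = convUnit k) (h2 : conv k g' f = convUnit k) : g' = g := by
  have h3 := congrArg (conv k g') h1
  rw [← conv_assoc, h2, conv_convUnit_left, conv_convUnit_right] at h3
  exact h3.symm

end ConvAux

section GaugeAux

variable {H A : Type} [Ring H] [HopfAlgebra k H] [Ring A] [Algebra k A]

/-- `h ↦ 1 ⊗ S(h)`. -/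
def gaugeAlpha : H →ₗ[k] A ⊗[k] H :=
  (Algebra.TensorProduct.includeRight (R := k) (A := A) (B := H)).toLinearMap ∘ₗ
    HopfAlgebra.antipode (R := k)

/-- `h ↦ 1 ⊗ h`. -/
def gaugeGamma : H →ₗ[k] A ⊗[k] H :=
  (Algebra.TensorProduct.includeRight (R := k) (A := A) (B := H)).toLinearMap

/-- `h ↦ f(h) ⊗ 1`. -/
def gaugeBeta (f : H →ₗ[k] A) : H →ₗ[k] A ⊗[k] H :=
  (Algebra.TensorProduct.includeLeft (R := k) (S := k) (A := A) (B := H)).toLinearMap ∘ₗ f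

@[simp] lemma gaugeAlpha_apply (x : H) :
    gaugeAlpha k (A := A) x = (1 : A) ⊗ₜ[k] HopfAlgebra.antipode (R := k) x := rfl

@[simp] lemma gaugeGamma_apply (x : H) :
    gaugeGamma k (A := A) x = (1 : A) ⊗ₜ[k] x := rfl

@[simp] lemma gaugeBeta_apply (f : H →ₗ[k] A) (x : H) :
    gaugeBeta k f x = f x ⊗ₜ[k] (1 : H) := rfl

lemma conv_alpha_gamma :
    conv k (gaugeAlpha k (H := H) (A := A)) (gaugeGamma k) = convUnit k := by
  apply LinearMap.ext; intro x
  set r := Coalgebra.Repr.arbitrary k x with hr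
  have h2 := HopfAlgebra.mul_antipode_rTensor_comul_apply (R := k) x
  rw [show Coalgebra.comul (R := k) x = ∑ i ∈ r.index, r.left i ⊗ₜ[k] r.right i from r.eq.symm,
    map_sum, map_sum] at h2
  simp only [LinearMap.rTensor_tmul, LinearMap.mul'_apply] at h2
  rw [conv_apply_repr k _ _ r, convUnit_apply]
  simp only [gaugeAlpha_apply, gaugeGamma_apply, Algebra.TensorProduct.tmul_mul_tmul, one_mul]
  rw [← TensorProduct.tmul_sum, h2]
  exact (Algebra.TensorProduct.algebraMap_apply' _).symm

lemma conv_gamma_alpha :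
    conv k (gaugeGamma k (H := H) (A := A)) (gaugeAlpha k) = convUnit k := by
  apply LinearMap.ext; intro x
  set r := Coalgebra.Repr.arbitrary k x with hr
  have h2 := HopfAlgebra.mul_antipode_lTensor_comul_apply (R := k) x
  rw [show Coalgebra.comul (R := k) x = ∑ i ∈ r.index, r.left i ⊗ₜ[k] r.right i from r.eq.symm,
    map_sum, map_sum] at h2
  simp only [LinearMap.lTensor_tmul, LinearMap.mul'_apply] at h2
  rw [conv_apply_repr k _ _ r, convUnit_apply]
  simp only [gaugeAlpha_apply, gaugeGamma_apply, Algebra.TensorProduct.tmul_mul_tmul, one_mul]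
  rw [← TensorProduct.tmul_sum, h2]
  exact (Algebra.TensorProduct.algebraMap_apply' _).symm

lemma conv_beta_beta (f g : H →ₗ[k] A) :
    conv k (gaugeBeta k f) (gaugeBeta k g) = gaugeBeta k (conv k f g) := by
  apply LinearMap.ext; intro x
  set r := Coalgebra.Repr.arbitrary k x with hr
  rw [conv_apply_repr k _ _ r, gaugeBeta_apply, conv_apply_repr k f g r,
    TensorProduct.sum_tmul]
  simp

lemma gaugeBeta_convUnit :
    gaugeBeta k (convUnit k : H →ₗ[k] A) = convUnit k := by
  apply LinearMap.ext; intro x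
  rw [gaugeBeta_apply, convUnit_apply, convUnit_apply,
    Algebra.TensorProduct.algebraMap_apply]

lemma AdMap_repr {ι κ : Type} {x : H} (r : Coalgebra.Repr k x ι)
    (r2 : (i : ι) → Coalgebra.Repr k (r.right i) κ) :
    AdMap (k := k) x = ∑ i ∈ r.index, ∑ j ∈ (r2 i).index,
      (r2 i).left j ⊗ₜ[k]
        (HopfAlgebra.antipode (R := k) (r.left i) * (r2 i).right j) := by
  have h0 : LinearMap.lTensor H (Coalgebra.comul (R := k)) (Coalgebra.comul (R := k) x)
      = ∑ i ∈ r.index, ∑ j ∈ (r2 i).index,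
          r.left i ⊗ₜ[k] ((r2 i).left j ⊗ₜ[k] (r2 i).right j) := by
    rw [show Coalgebra.comul (R := k) x = ∑ i ∈ r.index, r.left i ⊗ₜ[k] r.right i from r.eq.symm,
      map_sum]
    refine Finset.sum_congr rfl fun i _ => ?_
    rw [LinearMap.lTensor_tmul, ← (r2 i).eq, TensorProduct.tmul_sum]
  have h1 : LinearMap.rTensor H (Coalgebra.comul (R := k)) (Coalgebra.comul (R := k) x)
      = ∑ i ∈ r.index, ∑ j ∈ (r2 i).index,
          (r.left i ⊗ₜ[k] (r2 i).left j) ⊗ₜ[k] (r2 i).right j := by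
    rw [← Coalgebra.coassoc_symm_apply, h0, ← LinearEquiv.coe_coe, map_sum]
    refine Finset.sum_congr rfl fun i _ => ?_
    rw [map_sum]
    exact Finset.sum_congr rfl fun j _ => TensorProduct.assoc_symm_tmul _ _ _
  rw [AdMap]
  simp only [LinearMap.comp_apply, LinearEquiv.coe_coe]
  rw [h1]
  simp only [map_sum, LinearMap.rTensor_tmul, LinearMap.comp_apply, LinearEquiv.coe_coe,
    TensorProduct.comm_tmul, TensorProduct.assoc_tmul, LinearMap.lTensor_tmul,
    LinearMap.mul'_apply]

lemma rTensor_AdMap_eq (f : H →ₗ[k] A) :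
    LinearMap.rTensor H f ∘ₗ AdMap (k := k) (H := H)
      = conv k (gaugeAlpha k) (conv k (gaugeBeta k f) (gaugeGamma k)) := by
  apply LinearMap.ext; intro x
  classical
  set r := Coalgebra.Repr.arbitrary k x with hr
  set r2 : (i : H × H) → Coalgebra.Repr k (r.right i) (H × H) :=
    fun i => Coalgebra.Repr.arbitrary k _ with hr2
  rw [LinearMap.comp_apply, AdMap_repr k r r2, map_sum, conv_apply_repr k _ _ r]
  refine Finset.sum_congr rfl fun i _ => ?_
  rw [map_sum, conv_apply_repr k _ _ (r2 i), Finset.mul_sum]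
  refine Finset.sum_congr rfl fun j _ => ?_
  simp [Algebra.TensorProduct.tmul_mul_tmul]

lemma rho_conv (c : ComodAlg k H A) (f g : H →ₗ[k] A) :
    c.ρ ∘ₗ conv k f g = conv k (c.ρ ∘ₗ f) (c.ρ ∘ₗ g) := by
  apply LinearMap.ext; intro x
  set r := Coalgebra.Repr.arbitrary k x with hr
  rw [LinearMap.comp_apply, conv_apply_repr k f g r, map_sum, conv_apply_repr k _ _ r]
  simp only [LinearMap.comp_apply]
  exact Finset.sum_congr rfl fun i _ => c.ρ_mul _ _

lemma rho_convUnit (c : ComodAlg k H A) :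
    c.ρ ∘ₗ (convUnit k : H →ₗ[k] A) = convUnit k := by
  apply LinearMap.ext; intro x
  rw [LinearMap.comp_apply, convUnit_apply, convUnit_apply,
    Algebra.algebraMap_eq_smul_one, map_smul, c.ρ_one, Algebra.algebraMap_eq_smul_one]

end GaugeAux


/-! ## Statement 12: the group of gauge transformations -/

set_option maxHeartbeats 1000000 in
/-- On a quantum principal bundle `B = A^{co H} ⊆ A`, the gauge transformations
form a group under the convolution product, with unit `η_A ∘ ε_H` and inverses
given by convolution inverses; in particular the convolution product of two
gauge transformations is again unital, convolution invertible and colinear for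
the adjoint coaction. -/
theorem gauge_transformations_form_a_group
    {H A : Type} [Ring H] [HopfAlgebra k H] [Ring A] [Algebra k A]
    (P : QPB k H A) :
    IsGauge P.toComodAlg (convUnit k) ∧
    (∀ f g : H →ₗ[k] A, IsGauge P.toComodAlg f → IsGauge P.toComodAlg g →
      IsGauge P.toComodAlg (conv k f g)) ∧
    (∀ f g h : H →ₗ[k] A, conv k (conv k f g) h = conv k f (conv k g h)) ∧
    (∀ f : H →ₗ[k] A, IsGauge P.toComodAlg f →
      conv k f (convUnit k) = f ∧ conv k (convUnit k) f = f) ∧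
    (∀ f : H →ₗ[k] A, IsGauge P.toComodAlg f →
      ∀ g : H →ₗ[k] A, conv k f g = convUnit k ∧ conv k g f = convUnit k →
        IsGauge P.toComodAlg g) := by
  classical
  have colinear_iff : ∀ f : H →ₗ[k] A,
      (∀ h : H, P.toComodAlg.ρ (f h) = LinearMap.rTensor H f (AdMap h)) ↔
        P.toComodAlg.ρ ∘ₗ f = LinearMap.rTensor H f ∘ₗ AdMap (k := k) :=
    fun f => ⟨fun hf => LinearMap.ext fun h => hf h, fun hf h => LinearMap.congr_fun hf h⟩
  have hcm : Coalgebra.comul (R := k) (1 : H) = (1 : H) ⊗ₜ[k] (1 : H) := by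
    rw [Bialgebra.comul_one, Algebra.TensorProduct.one_def]
  refine ⟨?_, ?_, fun f g h => conv_assoc k f g h,
    fun f _ => ⟨conv_convUnit_right k f, conv_convUnit_left k f⟩, ?_⟩
  · -- the unit is a gauge transformation
    refine ⟨⟨convUnit k, conv_convUnit_right k _, conv_convUnit_left k _⟩, ?_, ?_⟩
    · rw [convUnit_apply, Bialgebra.counit_one, map_one]
    · refine (colinear_iff (convUnit k)).mpr ?_
      have e2 : LinearMap.rTensor H (convUnit k : H →ₗ[k] A) ∘ₗ AdMap (k := k)
          = convUnit k := by
        rw [rTensor_AdMap_eq k, gaugeBeta_convUnit k, conv_convUnit_left k,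
          conv_alpha_gamma k]
      rw [e2, rho_convUnit k]
  · -- products of gauge transformations
    rintro f g ⟨⟨f', hf1, hf2⟩, hf3, hf4⟩ ⟨⟨g', hg1, hg2⟩, hg3, hg4⟩
    refine ⟨⟨conv k g' f', ?_, ?_⟩, ?_, ?_⟩
    · rw [conv_assoc k f g _, ← conv_assoc k g g' f', hg1, conv_convUnit_left, hf1]
    · rw [conv_assoc k g' f' _, ← conv_assoc k f' f g, hf2, conv_convUnit_left, hg2]
    · rw [conv, LinearMap.comp_apply, LinearMap.comp_apply, hcm, TensorProduct.map_tmul,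
        LinearMap.mul'_apply, hf3, hg3, one_mul]
    · refine (colinear_iff (conv k f g)).mpr ?_
      have hfm := (colinear_iff f).mp hf4
      have hgm := (colinear_iff g).mp hg4
      rw [rho_conv k _ f g, hfm, hgm, rTensor_AdMap_eq k f, rTensor_AdMap_eq k g,
        rTensor_AdMap_eq k (conv k f g), ← conv_beta_beta k f g,
        conv_assoc k (gaugeAlpha k) (conv k (gaugeBeta k f) (gaugeGamma k)) _,
        conv_assoc k (gaugeBeta k f) (gaugeGamma k) _,
        ← conv_assoc k (gaugeGamma k (H := H) (A := A)) (gaugeAlpha k) _,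
        conv_gamma_alpha k, conv_convUnit_left k,
        ← conv_assoc k (gaugeBeta k f) (gaugeBeta k g) (gaugeGamma k)]
  · -- convolution inverses of gauge transformations
    rintro f ⟨⟨f', hf1, hf2⟩, hf3, hf4⟩ g ⟨hg1, hg2⟩
    refine ⟨⟨f, hg2, hg1⟩, ?_, ?_⟩
    · have h1 := LinearMap.congr_fun hg1 (1 : H)
      rw [conv, LinearMap.comp_apply, LinearMap.comp_apply, hcm, TensorProduct.map_tmul,
        LinearMap.mul'_apply, hf3, one_mul, convUnit_apply] at h1
      rw [h1, Bialgebra.counit_one, map_one]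
    · refine (colinear_iff g).mpr ?_
      have hfm := (colinear_iff f).mp hf4
      have e1 : conv k (P.toComodAlg.ρ ∘ₗ f) (P.toComodAlg.ρ ∘ₗ g) = convUnit k := by
        rw [← rho_conv k _ f g, hg1, rho_convUnit k]
      have e2 : conv k (LinearMap.rTensor H g ∘ₗ AdMap (k := k))
          (P.toComodAlg.ρ ∘ₗ f) = convUnit k := by
        rw [hfm, rTensor_AdMap_eq k f, rTensor_AdMap_eq k g,
          conv_assoc k (gaugeAlpha k) (conv k (gaugeBeta k g) (gaugeGamma k)) _,
          conv_assoc k (gaugeBeta k g) (gaugeGamma k) _,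
          ← conv_assoc k (gaugeGamma k (H := H) (A := A)) (gaugeAlpha k) _,
          conv_gamma_alpha k, conv_convUnit_left k,
          ← conv_assoc k (gaugeBeta k g) (gaugeBeta k f) (gaugeGamma k),
          conv_beta_beta k g f, hg2, gaugeBeta_convUnit k, conv_convUnit_left k,
          conv_alpha_gamma k]
      exact (conv_inv_unique k e1 e2).symm


end QPBPaper
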